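/- arXiv:1201.3476 — 4 statements merged into one kernel-verified Lean document; each statement's English description precedes it below -/
import Mathlib

section
/- For every composition λ ∈ Λ(n,r) with λ_1 ≥ 1 and every integer k with 1 ≤ k ≤ λ_1 − 1, one has u_{λ,1}·T_1·T_2⋯T_k = q^k·u_{λ,k+1} + (q²−1)·Σ_{s=1}^{k} q^{2k−s−1}·u_{λ,s}. -/
/-!
Statement 0: Lemma 5.2 (ttu) of Du–Fu, "Small Representations for Affine q-Schur Algebras".

We model the tensor space `Ω_n^{⊗r}` inside the free ℂ-module on tuples `ℕ → ℕ`
(positions are 0-based; positions `≥ r` are never touched by the operators involved).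
The basis vector `ω_𝐢` corresponding to a tuple `𝐢` is `Finsupp.single 𝐢 1`.
-/

open Finsupp

/-- The (right) action of the Hecke generator `T_{k+1}` (1-based) on the tensor space,
acting on the (0-based) positions `k` and `k+1`. -/
noncomputable def TOp (q : ℂ) (k : ℕ) :
    ((ℕ → ℕ) →₀ ℂ) →ₗ[ℂ] ((ℕ → ℕ) →₀ ℂ) :=
  Finsupp.lift ((ℕ → ℕ) →₀ ℂ) ℂ (ℕ → ℕ) fun f =>
    if f k = f (k + 1) then q ^ 2 • Finsupp.single f 1
    else if f k < f (k + 1) then q • Finsupp.single (f ∘ Equiv.swap k (k + 1)) 1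
    else q • Finsupp.single (f ∘ Equiv.swap k (k + 1)) 1 + (q ^ 2 - 1) • Finsupp.single f 1

/-- The tuple `i_λ = (1,…,1,2,…,2,…,n,…,n)` (block `i` has length `λ_i`; `lam` is 1-based):
the value at (0-based) position `p` is `1 + #{i ∈ [1,n] : λ_1 + ⋯ + λ_i ≤ p}`. -/
def iLam (n : ℕ) (lam : ℕ → ℕ) : ℕ → ℕ := fun p =>
  1 + ((Finset.Icc 1 n).filter (fun i => (∑ j ∈ Finset.Icc 1 i, lam j) ≤ p)).card

/-- The basis vector `u_{λ,j} = ω_1^{⊗(j-1)} ⊗ ω_n ⊗ ω_1^{⊗(λ_1-j)} ⊗ ω_2^{⊗λ_2} ⊗ ⋯ ⊗ ω_n^{⊗λ_n}`: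
the tuple `i_λ` with the entry at (1-based) position `j` replaced by `n`. -/
noncomputable def uLam (n : ℕ) (lam : ℕ → ℕ) (j : ℕ) : (ℕ → ℕ) →₀ ℂ :=
  Finsupp.single (fun p => if p = j - 1 then n else iLam n lam p) 1

lemma TOp_single (q : ℂ) (k : ℕ) (f : ℕ → ℕ) :
    TOp q k (Finsupp.single f 1) =
      if f k = f (k+1) then q ^ 2 • Finsupp.single f 1
      else if f k < f (k+1) then q • Finsupp.single (f ∘ Equiv.swap k (k+1)) 1
      else q • Finsupp.single (f ∘ Equiv.swap k (k+1)) 1 + (q^2-1) • Finsupp.single f 1 := by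
  rw [TOp, Finsupp.lift_apply, Finsupp.sum_single_index (by simp), one_smul]

lemma iLam_lt (n : ℕ) (lam : ℕ → ℕ) (p : ℕ) (hp : p < lam 1) : iLam n lam p = 1 := by
  unfold iLam
  have h : ((Finset.Icc 1 n).filter (fun i => (∑ j ∈ Finset.Icc 1 i, lam j) ≤ p)) = ∅ := by
    rw [Finset.eq_empty_iff_forall_notMem]
    intro i hi
    rw [Finset.mem_filter, Finset.mem_Icc] at hi
    have h1 : lam 1 ≤ ∑ j ∈ Finset.Icc 1 i, lam j :=
      Finset.single_le_sum (fun j _ => Nat.zero_le _) (Finset.mem_Icc.2 ⟨le_refl 1, hi.1.1⟩)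
    omega
  rw [h]; rfl

lemma TOp_uLam_fix (q : ℂ) (n : ℕ) (lam : ℕ → ℕ) (j k : ℕ)
    (hj : 1 ≤ j) (hjk : j ≤ k) (hk : k + 1 < lam 1) :
    TOp q k (uLam n lam j) = q ^ 2 • uLam n lam j := by
  have hfk : (fun p => if p = j - 1 then n else iLam n lam p) k = 1 := by
    simp only [if_neg (by omega : ¬ k = j - 1)]
    exact iLam_lt n lam k (by omega)
  have hfk1 : (fun p => if p = j - 1 then n else iLam n lam p) (k+1) = 1 := by
    simp only [if_neg (by omega : ¬ k + 1 = j - 1)]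
    exact iLam_lt n lam (k+1) hk
  rw [uLam, TOp_single, if_pos (hfk.trans hfk1.symm)]

lemma TOp_uLam_succ (q : ℂ) (n : ℕ) (lam : ℕ → ℕ) (m : ℕ) (hn : 2 ≤ n)
    (hm : m + 1 < lam 1) :
    TOp q m (uLam n lam (m+1)) =
      q • uLam n lam (m+2) + (q^2-1) • uLam n lam (m+1) := by
  have hfk : (fun p => if p = m + 1 - 1 then n else iLam n lam p) m = n := by
    simp
  have hfk1 : (fun p => if p = m + 1 - 1 then n else iLam n lam p) (m+1) = 1 := by
    simp only [if_neg (by omega : ¬ m + 1 = m + 1 - 1)]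
    exact iLam_lt n lam (m+1) hm
  have hne : ¬ ((fun p => if p = m + 1 - 1 then n else iLam n lam p) m
      = (fun p => if p = m + 1 - 1 then n else iLam n lam p) (m+1)) := by
    rw [hfk, hfk1]; omega
  have hnlt : ¬ ((fun p => if p = m + 1 - 1 then n else iLam n lam p) m
      < (fun p => if p = m + 1 - 1 then n else iLam n lam p) (m+1)) := by
    rw [hfk, hfk1]; omega
  rw [uLam, TOp_single, if_neg hne, if_neg hnlt]
  have hswap : ((fun p => if p = m + 1 - 1 then n else iLam n lam p) ∘ Equiv.swap m (m+1))
      = (fun p => if p = m + 2 - 1 then n else iLam n lam p) := by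
    funext p
    simp only [Function.comp_apply]
    by_cases hpm : p = m
    · rw [hpm, Equiv.swap_apply_left]
      simp only [if_neg (by omega : ¬ m + 1 = m + 1 - 1), if_neg (by omega : ¬ m = m + 2 - 1)]
      rw [iLam_lt n lam (m+1) hm, iLam_lt n lam m (by omega)]
    by_cases hpm1 : p = m + 1
    · rw [hpm1, Equiv.swap_apply_right]
      simp only [if_pos (by omega : m = m + 1 - 1), if_pos (by omega : m + 1 = m + 2 - 1)]
    · rw [Equiv.swap_apply_of_ne_of_ne hpm hpm1]
      simp only [if_neg (by omega : ¬ p = m + 1 - 1), if_neg (by omega : ¬ p = m + 2 - 1)]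
  rw [hswap]
  rfl

/-- For `λ ∈ Λ(n,r)` with `λ_1 ≥ 1` and `1 ≤ k ≤ λ_1 - 1`:
`u_{λ,1}·T_1·T_2⋯T_k = q^k·u_{λ,k+1} + (q²−1)·∑_{s=1}^{k} q^{2k−s−1}·u_{λ,s}`. -/
theorem stmt0 (q : ℂ) (hq : q ≠ 0) (n r : ℕ) (hn : 2 ≤ n) (hr : 1 ≤ r)
    (lam : ℕ → ℕ) (hsum : (∑ i ∈ Finset.Icc 1 n, lam i) = r) (hl : 1 ≤ lam 1)
    (k : ℕ) (hk1 : 1 ≤ k) (hk2 : k ≤ lam 1 - 1) :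
    (List.range k).foldl (fun v j => TOp q j v) (uLam n lam 1)
      = q ^ k • uLam n lam (k + 1)
        + (q ^ 2 - 1) • ∑ s ∈ Finset.Icc 1 k, q ^ (2 * k - s - 1) • uLam n lam s := by
  induction k with
  | zero => omega
  | succ k ih =>
    rw [List.range_succ, List.foldl_append, List.foldl_cons, List.foldl_nil]
    rcases Nat.eq_zero_or_pos k with rfl | hkpos
    · simp only [List.range_zero, List.foldl_nil]
      rw [TOp_uLam_succ q n lam 0 hn (by omega)]
      norm_num
    · rw [ih hkpos (by omega), map_add, map_smul, map_smul, map_sum]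
      rw [TOp_uLam_succ q n lam k hn (by omega)]
      have hsum' : ∀ s ∈ Finset.Icc 1 k,
          TOp q k (q ^ (2 * k - s - 1) • uLam n lam s)
            = q ^ (2 * (k+1) - s - 1) • uLam n lam s := by
        intro s hs
        rw [Finset.mem_Icc] at hs
        rw [map_smul, TOp_uLam_fix q n lam s k hs.1 hs.2 (by omega), smul_smul,
          ← pow_add, show 2 * k - s - 1 + 2 = 2 * (k + 1) - s - 1 from by omega]
      rw [Finset.sum_congr rfl hsum']
      rw [Finset.sum_Icc_succ_top (by omega : 1 ≤ k + 1)]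
      have he : 2 * (k + 1) - (k + 1) - 1 = k := by omega
      rw [he, show k + 1 + 1 = k + 2 from rfl]
      rw [smul_add, smul_smul, smul_smul, ← pow_succ]
      module
end

section
/- For every integer k with 2 ≤ k ≤ n, all natural numbers λ_1,…,λ_{k−1} with λ_1+⋯+λ_{k−1} ≤ r, and every tuple 𝐣 ∈ [k,n]^{r−(λ_1+⋯+λ_{k−1})}, one has f_k(ω_1^{⊗λ_1}⊗ω_2^{⊗λ_2}⊗⋯⊗ω_{k−1}^{⊗λ_{k−1}}⊗ω_𝐣) = Σ_{s=1}^{λ_1} q^{1−s}·ω_1^{⊗(s−1)}⊗ω_k⊗ω_1^{⊗(λ_1−s)}⊗ω_2^{⊗λ_2}⊗⋯⊗ω_{k−1}^{⊗λ_{k−1}}⊗ω_𝐣, where ω_𝐣 = ω_{j_1}⊗⋯⊗ω_{j_m}. -/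
/-!
Statement 1: Lemma 5.4 (action of `f_k`) of Du–Fu,
"Small Representations for Affine q-Schur Algebras".

We model the tensor space `Ω_n^{⊗r}` inside the free ℂ-module on tuples `ℕ → ℕ`
(positions are 0-based; positions `≥ r` are never touched by the operators involved).
-/

open Finsupp

/-- The diagonal coefficient of `K̃_i⁻¹` on `ω_v`: `q^{-δ_{i,v}+δ_{i+1,v}}`. -/
noncomputable def Kcoef (q : ℂ) (i : ℕ) (v : ℕ) : ℂ :=
  if v = i then q⁻¹ else if v = i + 1 then q else 1

/-- The operator `Δ^{(r)}(F_i) = ∑_{s=1}^r (K̃_i⁻¹)^{⊗(s-1)} ⊗ F_i ⊗ 1^{⊗(r-s)}`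
on the tensor space, where `F_i·ω_j = δ_{i,j}·ω_{j+1}` (all indices 1-based,
positions 0-based). -/
noncomputable def DF (q : ℂ) (r i : ℕ) :
    ((ℕ → ℕ) →₀ ℂ) →ₗ[ℂ] ((ℕ → ℕ) →₀ ℂ) :=
  Finsupp.lift ((ℕ → ℕ) →₀ ℂ) ℂ (ℕ → ℕ) fun f =>
    ∑ s ∈ Finset.range r, (∏ t ∈ Finset.range s, Kcoef q i (f t)) •
      (if f s = i then Finsupp.single (Function.update f s (i + 1)) (1 : ℂ) else 0)

/-- The operators `f_k`: `f_2 = Δ^{(r)}(F_1)` and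
`f_k = Δ^{(r)}(F_{k-1}) ∘ f_{k-1} - q⁻¹ · f_{k-1} ∘ Δ^{(r)}(F_{k-1})`. -/
noncomputable def fk (q : ℂ) (r : ℕ) :
    ℕ → (((ℕ → ℕ) →₀ ℂ) →ₗ[ℂ] ((ℕ → ℕ) →₀ ℂ))
  | 0 => 0
  | 1 => 0
  | 2 => DF q r 1
  | (k + 3) => DF q r (k + 2) ∘ₗ fk q r (k + 2)
      - q⁻¹ • (fk q r (k + 2) ∘ₗ DF q r (k + 2))

/-!
Induction on `k` along `f_{k+1} = Δ(F_k) f_k - q⁻¹ f_k Δ(F_k)`. A tuple of the stated shape is a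
staircase: letters `< k`, then one block of `λ_k` letters `k`, then letters `> k`. On such a tuple
`Δ(F_k)` raises the letters of the block one at a time, the `m`-th with coefficient `q^{-m}` coming
from the `K̃_k⁻¹` factors of the `k`'s before it, since smaller letters contribute the factor `1`.
-/

section DF

variable (q : ℂ) (r i : ℕ)

lemma Kcoef_of_lt {v : ℕ} (h : v < i) : Kcoef q i v = 1 := by
  simp [Kcoef, h.ne, (h.trans i.lt_succ_self).ne]

lemma prod_Kcoef_eq_one_of_lt {g : ℕ → ℕ} {a : ℕ} (h : ∀ t < a, g t < i) :
    ∏ t ∈ Finset.range a, Kcoef q i (g t) = 1 :=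
  Finset.prod_eq_one fun t ht => Kcoef_of_lt q i (h t (Finset.mem_range.mp ht))

lemma prod_Kcoef_update_eq_inv {g : ℕ → ℕ} {a e : ℕ} (hea : e < a) (h : ∀ t < a, g t < i) :
    ∏ t ∈ Finset.range a, Kcoef q i (Function.update g e i t) = q⁻¹ := by
  rw [Finset.prod_eq_single_of_mem e (Finset.mem_range.mpr hea), Function.update_self,
    Kcoef, if_pos rfl]
  intro t ht hte
  rw [Function.update_of_ne hte]
  exact Kcoef_of_lt q i (h t (Finset.mem_range.mp ht))

lemma prod_Kcoef_range_add {g : ℕ → ℕ} {a m : ℕ} (h : ∀ t, a ≤ t → t < a + m → g t = i) :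
    ∏ t ∈ Finset.range (a + m), Kcoef q i (g t)
      = (∏ t ∈ Finset.range a, Kcoef q i (g t)) * q⁻¹ ^ m := by
  rw [Finset.prod_range_add]
  congr 1
  rw [Finset.prod_congr rfl fun t ht => by
    rw [h (a + t) (by omega) (by simp at ht; omega), Kcoef, if_pos rfl]]
  simp

lemma DF_single (g : ℕ → ℕ) :
    DF q r i (Finsupp.single g 1) =
      ∑ s ∈ Finset.range r, (∏ t ∈ Finset.range s, Kcoef q i (g t)) •
        (if g s = i then Finsupp.single (Function.update g s (i + 1)) (1 : ℂ) else 0) := by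
  simp [DF, Finsupp.lift_apply, Finsupp.sum_single_index]

lemma DF_single_eq_sum {g : ℕ → ℕ} (A : Finset ℕ) (hAr : A ⊆ Finset.range r)
    (hA : ∀ s ∈ A, g s = i) (hAc : ∀ s < r, s ∉ A → g s ≠ i) :
    DF q r i (Finsupp.single g 1) = ∑ s ∈ A, (∏ t ∈ Finset.range s, Kcoef q i (g t)) •
      Finsupp.single (Function.update g s (i + 1)) (1 : ℂ) := by
  rw [DF_single, ← Finset.sum_subset hAr fun s hs hsA => by
    rw [if_neg (hAc s (Finset.mem_range.mp hs) hsA), smul_zero]]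
  exact Finset.sum_congr rfl fun s hs => by rw [if_pos (hA s hs)]

variable {q r i} {g : ℕ → ℕ} {a len : ℕ} (hlen : a + len ≤ r) (hlow : ∀ t < a, g t < i)
  (hblock : ∀ t, a ≤ t → t < a + len → g t = i) (hhigh : ∀ t, a + len ≤ t → t < r → i < g t)
include hlen hlow hblock hhigh

lemma DF_single_of_block :
    DF q r i (Finsupp.single g 1) = ∑ m ∈ Finset.range len, q⁻¹ ^ m •
      Finsupp.single (Function.update g (a + m) (i + 1)) (1 : ℂ) := by
  rw [DF_single_eq_sum q r i (Finset.Ico a (a + len))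
    (fun s hs => by simp at hs ⊢; omega)
    (fun s hs => hblock s (Finset.mem_Ico.mp hs).1 (Finset.mem_Ico.mp hs).2)
    (fun s hs hsA => by
      simp only [Finset.mem_Ico, not_and_or, not_le, not_lt] at hsA
      rcases hsA with h | h; exacts [(hlow s h).ne, (hhigh s h hs).ne']),
    Finset.sum_Ico_eq_sum_range, Nat.add_sub_cancel_left]
  refine Finset.sum_congr rfl fun m hm => ?_
  rw [prod_Kcoef_range_add q i (m := m) fun t h1 h2 => hblock t h1 (by simp at hm; omega),
    prod_Kcoef_eq_one_of_lt q i hlow, one_mul]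

lemma DF_single_update_of_block {e : ℕ} (he : e < a) :
    DF q r i (Finsupp.single (Function.update g e i) 1)
      = Finsupp.single (Function.update g e (i + 1)) (1 : ℂ)
        + ∑ m ∈ Finset.range len, q⁻¹ ^ (m + 1) •
          Finsupp.single (Function.update (Function.update g e i) (a + m) (i + 1)) (1 : ℂ) := by
  have hblock' : ∀ t, a ≤ t → t < a + len → Function.update g e i t = i := fun t h1 h2 => by
    rw [Function.update_of_ne (by omega), hblock t h1 h2]
  rw [DF_single_eq_sum q r i (insert e (Finset.Ico a (a + len)))
    (fun s hs => by simp at hs ⊢; omega)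
    (fun s hs => by
      rcases Finset.mem_insert.mp hs with rfl | hs
      · exact Function.update_self ..
      · exact hblock' s (Finset.mem_Ico.mp hs).1 (Finset.mem_Ico.mp hs).2)
    (fun s hs hsA => by
      simp only [Finset.mem_insert, Finset.mem_Ico, not_or, not_and_or, not_le, not_lt] at hsA
      rw [Function.update_of_ne hsA.1]
      rcases hsA.2 with h | h; exacts [(hlow s h).ne, (hhigh s h hs).ne']),
    Finset.sum_insert (by simp; omega), Finset.sum_Ico_eq_sum_range, Nat.add_sub_cancel_left,
    prod_Kcoef_eq_one_of_lt q i fun t ht => by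
      rw [Function.update_of_ne (by omega)]; exact hlow t (by omega),
    one_smul, Function.update_idem]
  congr 1
  refine Finset.sum_congr rfl fun m hm => ?_
  rw [prod_Kcoef_range_add q i (m := m) fun t h1 h2 => hblock' t h1 (by simp at hm; omega),
    prod_Kcoef_update_eq_inv q i he hlow, pow_succ']

end DF

lemma fk_succ (q : ℂ) (r : ℕ) {k : ℕ} (hk : 2 ≤ k) :
    fk q r (k + 1) = DF q r k ∘ₗ fk q r k - q⁻¹ • (fk q r k ∘ₗ DF q r k) := by
  obtain ⟨m, rfl⟩ : ∃ m, k = m + 2 := ⟨k - 2, by omega⟩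
  rfl

section partialSum

def partialSum (lam : ℕ → ℕ) (i : ℕ) : ℕ := ∑ j ∈ Finset.Icc 1 i, lam j

variable (lam : ℕ → ℕ)

lemma partialSum_zero : partialSum lam 0 = 0 := by simp [partialSum]

lemma partialSum_succ (i : ℕ) : partialSum lam (i + 1) = partialSum lam i + lam (i + 1) :=
  Finset.sum_Icc_succ_top (by omega) lam

lemma partialSum_one : partialSum lam 1 = lam 1 := by
  rw [partialSum_succ, partialSum_zero, zero_add]

lemma monotone_partialSum : Monotone (partialSum lam) :=
  monotone_nat_of_le_succ fun i => by rw [partialSum_succ]; omega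

variable {lam} {m p : ℕ}

lemma card_filter_partialSum_le_lt {i : ℕ} (hp : p < partialSum lam i) :
    ((Finset.Icc 1 m).filter (fun j => partialSum lam j ≤ p)).card < i := by
  have hi : i ≠ 0 := by rintro rfl; simp [partialSum_zero] at hp
  have hsub : (Finset.Icc 1 m).filter (fun j => partialSum lam j ≤ p) ⊆ Finset.Icc 1 (i - 1) :=
    fun j hj => by
      simp only [Finset.mem_filter, Finset.mem_Icc] at hj ⊢
      have := (monotone_partialSum lam).reflect_lt (hj.2.trans_lt hp)
      omega
  have := Finset.card_le_card hsub
  simp only [Nat.card_Icc] at this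
  omega

lemma card_filter_partialSum_le_eq {i : ℕ} (him : i ≤ m) (h1 : partialSum lam i ≤ p)
    (h2 : p < partialSum lam (i + 1)) :
    ((Finset.Icc 1 m).filter (fun j => partialSum lam j ≤ p)).card = i := by
  have : (Finset.Icc 1 m).filter (fun j => partialSum lam j ≤ p) = Finset.Icc 1 i := by
    ext j
    simp only [Finset.mem_filter, Finset.mem_Icc]
    constructor
    · rintro ⟨⟨hj1, -⟩, hj⟩
      have := (monotone_partialSum lam).reflect_lt (hj.trans_lt h2)
      omega
    · rintro ⟨hj1, hj⟩
      exact ⟨⟨hj1, hj.trans him⟩, (monotone_partialSum lam hj).trans h1⟩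
  rw [this, Nat.card_Icc, Nat.add_sub_cancel]

lemma filter_partialSum_le_Icc_succ (hp : p < partialSum lam (m + 1)) :
    (Finset.Icc 1 (m + 1)).filter (fun j => partialSum lam j ≤ p)
      = (Finset.Icc 1 m).filter (fun j => partialSum lam j ≤ p) := by
  rw [← Finset.insert_Icc_right_eq_Icc_add_one (by omega), Finset.filter_insert,
    if_neg hp.not_ge]

end partialSum

/-- Applying `Δ(F_k)` to `f_k(ω_g) = ∑ q^{-m} ω_{g[m ↦ k]}` either raises the
new letter `k` at position `m` (coefficient `1`: only smaller letters precede it), or raises a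
letter of the block of `k`'s, picking up an extra `q⁻¹` from position `m`; the latter terms are
exactly `q⁻¹ f_k(Δ(F_k) ω_g)` and cancel. -/
lemma fk_succ_single_of_block (q : ℂ) (r : ℕ) {k : ℕ} (hk : 2 ≤ k) {g : ℕ → ℕ} {L S len : ℕ}
    (hLS : L ≤ S) (hr : S + len ≤ r) (hlow : ∀ p < S, g p < k)
    (hblock : ∀ p, S ≤ p → p < S + len → g p = k) (hhigh : ∀ p, S + len ≤ p → p < r → k < g p)
    (hfk : ∀ h : ℕ → ℕ, (∀ p < S, h p = g p) → (∀ p, S ≤ p → p < r → k ≤ h p) →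
      fk q r k (Finsupp.single h 1)
        = ∑ m ∈ Finset.range L, q⁻¹ ^ m • Finsupp.single (Function.update h m k) (1 : ℂ)) :
    fk q r (k + 1) (Finsupp.single g 1)
      = ∑ m ∈ Finset.range L, q⁻¹ ^ m • Finsupp.single (Function.update g m (k + 1)) (1 : ℂ) := by
  have hgk : ∀ p, S ≤ p → p < r → k ≤ g p := fun p h1 h2 => by
    by_cases hp : p < S + len
    · exact (hblock p h1 hp).ge
    · exact (hhigh p (by omega) h2).le
  have hDF_update : ∀ m ∈ Finset.range L,
      DF q r k (Finsupp.single (Function.update g m k) 1)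
        = Finsupp.single (Function.update g m (k + 1)) (1 : ℂ)
          + ∑ j ∈ Finset.range len, q⁻¹ ^ (j + 1) • Finsupp.single
            (Function.update (Function.update g m k) (S + j) (k + 1)) (1 : ℂ) :=
    fun m hm => DF_single_update_of_block hr hlow hblock hhigh (by simp at hm; omega)
  have hfk_raise : ∀ j ∈ Finset.range len,
      fk q r k (Finsupp.single (Function.update g (S + j) (k + 1)) 1)
        = ∑ m ∈ Finset.range L, q⁻¹ ^ m • Finsupp.single
            (Function.update (Function.update g m k) (S + j) (k + 1)) (1 : ℂ) := by
    intro j hj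
    simp only [Finset.mem_range] at hj
    rw [hfk _ (fun p hp => Function.update_of_ne (by omega) _ _) fun p h1 h2 => by
      rcases eq_or_ne p (S + j) with rfl | hp
      · rw [Function.update_self]; omega
      · rw [Function.update_of_ne hp]; exact hgk p h1 h2]
    exact Finset.sum_congr rfl fun m hm => by
      rw [Function.update_comm (by simp at hm; omega)]
  rw [fk_succ q r hk, LinearMap.sub_apply, LinearMap.comp_apply, LinearMap.smul_apply,
    LinearMap.comp_apply, hfk g (fun _ _ => rfl) hgk, DF_single_of_block hr hlow hblock hhigh]
  simp only [map_sum, map_smul]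
  rw [Finset.sum_congr rfl fun m hm => congrArg (q⁻¹ ^ m • ·) (hDF_update m hm),
    Finset.sum_congr rfl fun j hj => congrArg (q⁻¹ ^ j • ·) (hfk_raise j hj)]
  simp only [smul_add, Finset.sum_add_distrib, Finset.smul_sum, smul_smul]
  rw [Finset.sum_comm (s := Finset.range len), add_sub_assoc, add_eq_left, sub_eq_zero]
  exact Finset.sum_congr rfl fun m _ => Finset.sum_congr rfl fun j _ => by
    congr 1; ring

theorem fk_single_of_staircase (q : ℂ) (r : ℕ) {k : ℕ} (hk : 2 ≤ k) (lam g : ℕ → ℕ)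
    (hS : partialSum lam (k - 1) ≤ r)
    (hg1 : ∀ p < partialSum lam (k - 1),
      g p = 1 + ((Finset.Icc 1 (k - 1)).filter (fun j => partialSum lam j ≤ p)).card)
    (hg2 : ∀ p, partialSum lam (k - 1) ≤ p → p < r → k ≤ g p) :
    fk q r k (Finsupp.single g 1)
      = ∑ m ∈ Finset.range (lam 1), q⁻¹ ^ m • Finsupp.single (Function.update g m k) (1 : ℂ) := by
  induction k, hk using Nat.le_induction generalizing g with
  | base =>
    rw [partialSum_one] at hS hg1 hg2
    have := DF_single_of_block (q := q) (a := 0) (len := lam 1) (by omega) (by omega)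
      (fun t _ ht => by
        rw [hg1 t (by omega), card_filter_partialSum_le_eq (Nat.zero_le _)
          (by simp [partialSum_zero]) (by rw [zero_add, partialSum_one]; omega)])
      (fun t ht htr => hg2 t (by omega) htr)
    simp only [zero_add] at this
    exact this
  | succ k hk ih =>
    rw [Nat.add_sub_cancel] at hS hg1 hg2
    have hk1 : k - 1 + 1 = k := by omega
    set S := partialSum lam (k - 1)
    have hSk : partialSum lam k = S + lam k := by rw [← hk1, partialSum_succ, hk1]
    rw [hSk] at hS hg1 hg2
    refine fk_succ_single_of_block q r hk
      (partialSum_one lam ▸ monotone_partialSum lam (by omega : 1 ≤ k - 1)) hS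
      (fun p hp => ?_) (fun p h1 h2 => ?_) hg2 (fun h hagree hhigh => ih h (by omega) ?_ hhigh)
    · have := card_filter_partialSum_le_lt (m := k) hp
      rw [hg1 p (by omega)]
      omega
    · rw [hg1 p h2, card_filter_partialSum_le_eq (by omega) h1 (by rwa [hk1, hSk])]
      omega
    · intro p hp
      rw [hagree p hp, hg1 p (by omega), ← filter_partialSum_le_Icc_succ (m := k - 1)
        (by rw [hk1, hSk]; omega), hk1]

theorem stmt1_general (q : ℂ) (n r : ℕ)
    (k : ℕ) (hk : 2 ≤ k) (lam : ℕ → ℕ)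
    (hS : (∑ j ∈ Finset.Icc 1 (k - 1), lam j) ≤ r)
    (g : ℕ → ℕ)
    (hg1 : ∀ p, p < (∑ j ∈ Finset.Icc 1 (k - 1), lam j) →
      g p = 1 + ((Finset.Icc 1 (k - 1)).filter
        (fun i => (∑ j ∈ Finset.Icc 1 i, lam j) ≤ p)).card)
    (hg2 : ∀ p, (∑ j ∈ Finset.Icc 1 (k - 1), lam j) ≤ p → p < r →
      k ≤ g p ∧ g p ≤ n) :
    fk q r k (Finsupp.single g 1)
      = ∑ s ∈ Finset.Icc 1 (lam 1),
          q ^ ((1 : ℤ) - (s : ℤ)) •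
            Finsupp.single (Function.update g (s - 1) k) (1 : ℂ) := by
  rw [fk_single_of_staircase q r hk lam g hS hg1 fun p h1 h2 => (hg2 p h1 h2).1,
    ← Finset.Ico_add_one_right_eq_Icc, Finset.sum_Ico_eq_sum_range, Nat.add_sub_cancel]
  refine Finset.sum_congr rfl fun m _ => ?_
  rw [Nat.add_sub_cancel_left, Nat.cast_add, Nat.cast_one, sub_add_cancel_left, zpow_neg,
    zpow_natCast, inv_pow]

/-- For `2 ≤ k ≤ n`, `λ_1,…,λ_{k-1} ∈ ℕ` with `λ_1+⋯+λ_{k-1} ≤ r`, and a basis tuple `g`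
of the form `ω_1^{⊗λ_1}⊗⋯⊗ω_{k-1}^{⊗λ_{k-1}}⊗ω_𝐣` with `𝐣 ∈ [k,n]^{r-(λ_1+⋯+λ_{k-1})}`:
`f_k(ω_g) = ∑_{s=1}^{λ_1} q^{1-s}·ω_1^{⊗(s-1)}⊗ω_k⊗ω_1^{⊗(λ_1-s)}⊗ω_2^{⊗λ_2}⊗⋯⊗ω_𝐣`. -/
theorem stmt1 (q : ℂ) (hq : q ≠ 0) (n r : ℕ) (hn : 2 ≤ n) (hr : 1 ≤ r)
    (k : ℕ) (hk : 2 ≤ k) (hkn : k ≤ n) (lam : ℕ → ℕ)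
    (hS : (∑ j ∈ Finset.Icc 1 (k - 1), lam j) ≤ r)
    (g : ℕ → ℕ)
    (hg1 : ∀ p, p < (∑ j ∈ Finset.Icc 1 (k - 1), lam j) →
      g p = 1 + ((Finset.Icc 1 (k - 1)).filter
        (fun i => (∑ j ∈ Finset.Icc 1 i, lam j) ≤ p)).card)
    (hg2 : ∀ p, (∑ j ∈ Finset.Icc 1 (k - 1), lam j) ≤ p → p < r →
      k ≤ g p ∧ g p ≤ n) :
    fk q r k (Finsupp.single g 1)
      = ∑ s ∈ Finset.Icc 1 (lam 1),
          q ^ ((1 : ℤ) - (s : ℤ)) •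
            Finsupp.single (Function.update g (s - 1) k) (1 : ℂ) :=
  stmt1_general q n r k hk lam hS g hg1 hg2
end

section
/- Let q be a nonzero complex number that is not a root of unity and n ≥ 1 an integer. If Q₁ and Q₂ are polynomials in ℂ[u] with constant terms 1 such that ∏_{l=0}^{n−1} Q₁(q^{2l}u) = ∏_{l=0}^{n−1} Q₂(q^{2l}u) in ℂ[u], then Q₁ = Q₂. -/
/-!
Statement 10: if `q` is not a root of unity and `Q₁, Q₂` have constant term 1 with
`∏_{l=0}^{n−1} Q₁(q^{2l}u) = ∏_{l=0}^{n−1} Q₂(q^{2l}u)`, then `Q₁ = Q₂`.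
-/

open Polynomial

private lemma coeff_comp_C_mul_X (Q : Polynomial ℂ) (a : ℂ) (k : ℕ) :
    (Q.comp (C a * X)).coeff k = a ^ k * Q.coeff k := by
  induction Q using Polynomial.induction_on' with
  | add p qq hp hq => simp only [add_comp, coeff_add, hp, hq, mul_add]
  | monomial m b =>
    rw [monomial_comp, mul_pow, ← C_pow, ← mul_assoc, ← C_mul, coeff_C_mul,
      coeff_X_pow, coeff_monomial]
    by_cases hmk : k = m
    · subst hmk; simp [mul_comm]
    · rw [if_neg hmk, if_neg fun hh => hmk hh.symm]; ring

theorem stmt10 (q : ℂ) (hq : q ≠ 0) (hru : ∀ m : ℕ, 1 ≤ m → q ^ m ≠ 1)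
    (n : ℕ) (hn : 1 ≤ n) (Q₁ Q₂ : Polynomial ℂ)
    (h1 : Q₁.coeff 0 = 1) (h2 : Q₂.coeff 0 = 1)
    (h : ∏ l ∈ Finset.range n, Q₁.comp (C (q ^ (2 * l)) * X)
       = ∏ l ∈ Finset.range n, Q₂.comp (C (q ^ (2 * l)) * X)) :
    Q₁ = Q₂ := by
  set c : ℕ → Polynomial ℂ := fun l => C (q ^ (2 * l)) * X with hc
  -- composing with c 1 shifts
  have hshift : ∀ l : ℕ, (c l).comp (c 1) = c (l + 1) := by
    intro l
    simp only [hc, mul_comp, C_comp, X_comp, ← mul_assoc, ← C_mul, ← pow_add]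
    ring
  have hc0 : c 0 = X := by simp [hc]
  -- key functional equation for any Q with constant coeff 1
  have key : ∀ Q : Polynomial ℂ,
      (∏ l ∈ Finset.range n, Q.comp (c l)).comp (c 1) * Q
      = (∏ l ∈ Finset.range n, Q.comp (c l)) * Q.comp (c n) := by
    intro Q
    rw [prod_comp]
    have : ∀ l ∈ Finset.range n, (Q.comp (c l)).comp (c 1) = Q.comp (c (l + 1)) := by
      intro l _
      rw [comp_assoc, hshift]
    rw [Finset.prod_congr rfl this]
    have e1 : (∏ l ∈ Finset.range n, Q.comp (c (l + 1))) * Q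
        = ∏ l ∈ Finset.range (n + 1), Q.comp (c l) := by
      rw [Finset.prod_range_succ']
      simp [hc0]
    have e2 : (∏ l ∈ Finset.range n, Q.comp (c l)) * Q.comp (c n)
        = ∏ l ∈ Finset.range (n + 1), Q.comp (c l) := by
      rw [Finset.prod_range_succ]
    rw [e1, e2]
  set P : Polynomial ℂ := ∏ l ∈ Finset.range n, Q₁.comp (c l) with hP
  have hk1 : P.comp (c 1) * Q₁ = P * Q₁.comp (c n) := key Q₁
  have hk2 : P.comp (c 1) * Q₂ = P * Q₂.comp (c n) := by
    rw [h]; exact key Q₂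
  have hPne : P ≠ 0 := by
    intro h0
    have : P.coeff 0 = 1 := by
      rw [hP, Polynomial.coeff_zero_eq_eval_zero, eval_prod]
      have : ∀ l ∈ Finset.range n, (Q₁.comp (c l)).eval 0 = 1 := by
        intro l _
        rw [eval_comp]
        simp [hc, ← Polynomial.coeff_zero_eq_eval_zero, h1]
      rw [Finset.prod_congr rfl this, Finset.prod_const_one]
    rw [h0] at this
    simp at this
  -- cross-multiply to get Q₁(q^{2n}u) Q₂ = Q₂(q^{2n}u) Q₁
  have star : Q₁.comp (c n) * Q₂ = Q₂.comp (c n) * Q₁ := by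
    have : P * (Q₁.comp (c n) * Q₂) = P * (Q₂.comp (c n) * Q₁) := by
      calc P * (Q₁.comp (c n) * Q₂) = (P * Q₁.comp (c n)) * Q₂ := by ring
        _ = (P.comp (c 1) * Q₁) * Q₂ := by rw [hk1]
        _ = (P.comp (c 1) * Q₂) * Q₁ := by ring
        _ = (P * Q₂.comp (c n)) * Q₁ := by rw [hk2]
        _ = P * (Q₂.comp (c n) * Q₁) := by ring
    exact mul_left_cancel₀ hPne this
  -- now suppose Q₁ ≠ Q₂ and look at lowest nonzero coefficient of δ = Q₁ - Q₂
  by_contra hne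
  set δ : Polynomial ℂ := Q₁ - Q₂ with hδ
  have hδne : δ ≠ 0 := sub_ne_zero.mpr hne
  set d : ℕ := δ.natTrailingDegree with hd
  have hδd : δ.coeff d ≠ 0 := Polynomial.coeff_natTrailingDegree_ne_zero.mpr hδne
  have hδ0 : δ.coeff 0 = 0 := by simp [hδ, h1, h2]
  have hdpos : 1 ≤ d := by
    rcases Nat.eq_zero_or_pos d with h0 | h0
    · exact absurd (h0 ▸ hδ0) hδd
    · exact h0
  -- rearrange star : Q₁.comp(cn) * δ = δ.comp(cn) * Q₁
  have star2 : Q₁.comp (c n) * δ = δ.comp (c n) * Q₁ := by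
    have hQ2 : Q₂ = Q₁ - δ := by rw [hδ]; ring
    have hs := star
    rw [hQ2, sub_comp] at hs
    linear_combination -hs
  -- compare coefficients of degree d
  have hcn : c n = C (q ^ (2 * n)) * X := rfl
  have hL : (Q₁.comp (c n) * δ).coeff d = δ.coeff d := by
    rw [coeff_mul]
    rw [Finset.sum_eq_single (0, d)]
    · rw [hcn, coeff_comp_C_mul_X]
      simp [h1]
    · rintro ⟨i, j⟩ hmem hne
      have hij : i + j = d := Finset.HasAntidiagonal.mem_antidiagonal.mp hmem
      have hjd : j < d := by
        rcases Nat.lt_or_ge j d with hj | hj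
        · exact hj
        · exfalso
          have : j = d := le_antisymm (by omega) hj
          exact hne (by simp [Prod.ext_iff, this]; omega)
      have : δ.coeff j = 0 := coeff_eq_zero_of_lt_natTrailingDegree (hd ▸ hjd)
      simp [this]
    · intro habs
      exact absurd (Finset.HasAntidiagonal.mem_antidiagonal.mpr (by simp)) habs
  have hR : (δ.comp (c n) * Q₁).coeff d = q ^ (2 * n * d) * δ.coeff d := by
    rw [coeff_mul]
    rw [Finset.sum_eq_single (d, 0)]
    · rw [hcn, coeff_comp_C_mul_X]
      rw [h1, ← pow_mul]
      ring
    · rintro ⟨i, j⟩ hmem hne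
      have hij : i + j = d := Finset.HasAntidiagonal.mem_antidiagonal.mp hmem
      have hid : i < d := by
        rcases Nat.lt_or_ge i d with hi | hi
        · exact hi
        · exfalso
          have : i = d := le_antisymm (by omega) hi
          exact hne (by simp [Prod.ext_iff, this]; omega)
      have : δ.coeff i = 0 := coeff_eq_zero_of_lt_natTrailingDegree (hd ▸ hid)
      rw [hcn, coeff_comp_C_mul_X, this]
      ring
    · intro habs
      exact absurd (Finset.HasAntidiagonal.mem_antidiagonal.mpr (by simp)) habs
  have heq : δ.coeff d = q ^ (2 * n * d) * δ.coeff d := by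
    conv_lhs => rw [← hL, star2]
    rw [hR]
  have h' : (q ^ (2 * n * d) - 1) * δ.coeff d = 0 := by linear_combination -heq
  rcases mul_eq_zero.mp h' with h' | h'
  · exact hru (2 * n * d) (by nlinarith) (by linear_combination h')
  · exact absurd h' hδd
end

section
/- Let n > r ≥ 1 and let 𝐬 ∈ 𝒮_r be a multisegment of total length r. Write ∂(𝐬) = (Q_1,…,Q_n). Then: (i) Q_i(q^{i−1}u) = P_i(u)·Q_{i+1}(q^{i+1}u) for all 1 ≤ i ≤ n−1, so ∂(𝐬) is dominant; (ii) deg Q_i equals the number of segments (a,k) in 𝐬, counted with multiplicity, with k ≥ i; (iii) Σ_{i=1}^n deg Q_i = r. Hence ∂(𝐬) ∈ 𝒬(n)_r. -/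
/-!
Substituting `u ↦ q^{i-1}u` in `Q_i` turns its factor `P_k(q^{k-2i+1}u)` into `P_k(q^{k-i}u)`,
and substituting `u ↦ q^{i+1}u` in `Q_{i+1}` produces the same factors for `k ≥ i+1`; the
remaining factor is `P_i(u)`. Each `P_k` has degree the number of segments of length `k`, so
`deg Q_i` counts the segments of length in `[i, n)`, which are all those of length `≥ i` because
lengths are at most `r < n`. Summing over `i` counts each segment `(a,k)` exactly `k` times.
-/

open Polynomial

/-- Substitution `u ↦ c·u` in a polynomial: `(scaleX c Q)(u) = Q(c·u)`. -/
noncomputable def scaleX (c : ℂ) (Q : Polynomial ℂ) : Polynomial ℂ :=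
  Q.comp (C c * X)

/-- `P_i(u) = ∏_{(a,k) ∈ 𝐬, k = i} (1 − a·u)` (product with multiplicity). -/
noncomputable def segP (s : Multiset (ℂ × ℕ)) (i : ℕ) : Polynomial ℂ :=
  ((s.filter (fun p => p.2 = i)).map (fun p => 1 - C p.1 * X)).prod

/-- `Q_i(u) = P_i(q^{1−i}u)·P_{i+1}(q^{2−i}u)⋯P_{n−1}(q^{n−2i}u)` (and `Q_n = 1`):
the `k`-th factor is `P_k(q^{k−2i+1}u)` for `i ≤ k ≤ n−1`. -/
noncomputable def segQ (q : ℂ) (n : ℕ) (s : Multiset (ℂ × ℕ)) (i : ℕ) :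
    Polynomial ℂ :=
  ∏ k ∈ Finset.Ico i n, scaleX (q ^ ((k : ℤ) - 2 * (i : ℤ) + 1)) (segP s k)

lemma Multiset.sum_Ico_countP_eq_countP_le {α : Type*} (f : α → ℕ) (i : ℕ) {n : ℕ}
    (s : Multiset α) (hs : ∀ a ∈ s, f a < n) :
    ∑ k ∈ Finset.Ico i n, s.countP (f · = k) = s.countP (i ≤ f ·) := by
  induction s using Multiset.induction with
  | empty => simp
  | cons a s ih =>
    have ha := hs a (Multiset.mem_cons_self a s)
    simp only [Multiset.countP_cons, Finset.sum_add_distrib, Finset.sum_ite_eq, Finset.mem_Ico]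
    rw [ih fun b hb => hs b (Multiset.mem_cons_of_mem hb)]
    split_ifs <;> omega

lemma Multiset.sum_Icc_countP_le_eq_sum_map {α : Type*} (f : α → ℕ) {n : ℕ}
    (s : Multiset α) (hs : ∀ a ∈ s, f a ≤ n) :
    ∑ i ∈ Finset.Icc 1 n, s.countP (i ≤ f ·) = (s.map f).sum := by
  induction s using Multiset.induction with
  | empty => simp
  | cons a s ih =>
    have ha := hs a (Multiset.mem_cons_self a s)
    have hfilter : (Finset.Icc 1 n).filter (· ≤ f a) = Finset.Icc 1 (f a) := by
      ext; simp only [Finset.mem_filter, Finset.mem_Icc]; omega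
    simp only [Multiset.countP_cons, Finset.sum_add_distrib, Finset.sum_boole, hfilter,
      Multiset.map_cons, Multiset.sum_cons]
    rw [ih fun b hb => hs b (Multiset.mem_cons_of_mem hb)]
    simp [add_comm]

lemma scaleX_one (Q : ℂ[X]) : scaleX 1 Q = Q := by
  simp [scaleX]

lemma scaleX_scaleX (c d : ℂ) (Q : ℂ[X]) : scaleX c (scaleX d Q) = scaleX (d * c) Q := by
  simp only [scaleX, comp_assoc, mul_comp, C_comp, X_comp, ← mul_assoc, ← C_mul]

lemma scaleX_prod {ι : Type*} (c : ℂ) (t : Finset ι) (f : ι → ℂ[X]) :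
    scaleX c (∏ k ∈ t, f k) = ∏ k ∈ t, scaleX c (f k) :=
  prod_comp t f _

lemma eval_zero_scaleX (c : ℂ) (Q : ℂ[X]) : (scaleX c Q).eval 0 = Q.eval 0 := by
  simp [scaleX, eval_comp]

lemma natDegree_scaleX {c : ℂ} (hc : c ≠ 0) (Q : ℂ[X]) :
    (scaleX c Q).natDegree = Q.natDegree := by
  rw [scaleX, natDegree_comp, natDegree_C_mul_X c hc, mul_one]

lemma natDegree_one_sub_C_mul_X {a : ℂ} (ha : a ≠ 0) : (1 - C a * X).natDegree = 1 := by
  rw [natDegree_sub_eq_right_of_natDegree_lt] <;> simp [natDegree_C_mul_X a ha]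

lemma eval_zero_segP (s : Multiset (ℂ × ℕ)) (i : ℕ) : (segP s i).eval 0 = 1 := by
  simp [segP, eval_multiset_prod]

lemma segP_ne_zero (s : Multiset (ℂ × ℕ)) (i : ℕ) : segP s i ≠ 0 := fun h => by
  simpa [h] using eval_zero_segP s i

lemma natDegree_segP {s : Multiset (ℂ × ℕ)} (hs : ∀ p ∈ s, p.1 ≠ 0) (i : ℕ) :
    (segP s i).natDegree = s.countP (·.2 = i) := by
  have hfactor : ∀ p ∈ s.filter (·.2 = i), (1 - C p.1 * X).natDegree = 1 :=
    fun p hp => natDegree_one_sub_C_mul_X (hs p (Multiset.mem_of_mem_filter hp))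
  have hzero : (0 : ℂ[X]) ∉ (s.filter (·.2 = i)).map fun p => 1 - C p.1 * X := by
    simpa using segP_ne_zero s i ∘ (Multiset.prod_eq_zero ·)
  rw [segP, natDegree_multiset_prod _ hzero, Multiset.map_map, Function.comp_def,
    Multiset.map_congr rfl hfactor, Multiset.map_const', Multiset.sum_replicate, smul_eq_mul,
    mul_one, Multiset.countP_eq_card_filter]

section segQ

variable {q : ℂ} {n : ℕ} {s : Multiset (ℂ × ℕ)}

lemma scaleX_pow_segQ (hq : q ≠ 0) (m i : ℕ) :
    scaleX (q ^ m) (segQ q n s i)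
      = ∏ k ∈ Finset.Ico i n, scaleX (q ^ ((k : ℤ) - 2 * i + 1 + m)) (segP s k) := by
  simp only [segQ, scaleX_prod, scaleX_scaleX, zpow_add₀ hq, zpow_natCast]

lemma scaleX_segQ_eq_segP_mul (hq : q ≠ 0) {i : ℕ} (hi : 1 ≤ i) (hin : i < n) :
    scaleX (q ^ (i - 1)) (segQ q n s i)
      = segP s i * scaleX (q ^ (i + 1)) (segQ q n s (i + 1)) := by
  rw [scaleX_pow_segQ hq, scaleX_pow_segQ hq, Finset.prod_eq_prod_Ico_succ_bot hin]
  congr 1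
  · rw [show (i : ℤ) - 2 * i + 1 + ((i - 1 : ℕ) : ℤ) = 0 by omega, zpow_zero, scaleX_one]
  · refine Finset.prod_congr rfl fun k _ => ?_
    congr 2
    push_cast
    omega

lemma coeff_zero_segQ (i : ℕ) : (segQ q n s i).coeff 0 = 1 := by
  simp [coeff_zero_eq_eval_zero, segQ, eval_prod, eval_zero_scaleX, eval_zero_segP]

lemma natDegree_segQ (hq : q ≠ 0) (hs : ∀ p ∈ s, p.1 ≠ 0) (hn : ∀ p ∈ s, p.2 < n) (i : ℕ) :
    (segQ q n s i).natDegree = s.countP (i ≤ ·.2) := by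
  rw [segQ, natDegree_prod _ _ fun k _ => ?_]
  · simp only [natDegree_scaleX (zpow_ne_zero _ hq), natDegree_segP hs]
    exact Multiset.sum_Ico_countP_eq_countP_le Prod.snd i s hn
  · intro h
    simpa [h, eval_zero_segP] using eval_zero_scaleX (q ^ ((k : ℤ) - 2 * i + 1)) (segP s k)

end segQ

theorem stmt12_general (q : ℂ) (hq : q ≠ 0)
    (n r : ℕ) (hnr : r < n)
    (s : Multiset (ℂ × ℕ)) (hs : ∀ p ∈ s, p.1 ≠ 0 ∧ 1 ≤ p.2)
    (hlen : (s.map Prod.snd).sum = r) :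
    (∀ i, 1 ≤ i → i ≤ n - 1 →
      scaleX (q ^ (i - 1)) (segQ q n s i)
          = segP s i * scaleX (q ^ (i + 1)) (segQ q n s (i + 1)) ∧
      scaleX (q ^ (i + 1)) (segQ q n s (i + 1)) ∣
        scaleX (q ^ (i - 1)) (segQ q n s i)) ∧
    (∀ i, 1 ≤ i → i ≤ n →
      (segQ q n s i).natDegree = (s.filter (fun p => i ≤ p.2)).card ∧
      (segQ q n s i).coeff 0 = 1) ∧
    (∑ i ∈ Finset.Icc 1 n, (segQ q n s i).natDegree) = r := by
  have hlength_le : ∀ p ∈ s, p.2 ≤ r := fun p hp =>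
    hlen ▸ Multiset.le_sum_of_mem (Multiset.mem_map_of_mem Prod.snd hp)
  have hlength_lt : ∀ p ∈ s, p.2 < n := fun p hp => (hlength_le p hp).trans_lt hnr
  have hdeg := natDegree_segQ hq (fun p hp => (hs p hp).1) hlength_lt
  refine ⟨fun i hi hin => ?_, fun i _ _ => ?_, ?_⟩
  · have hrec := scaleX_segQ_eq_segP_mul (n := n) (s := s) hq hi (by omega)
    exact ⟨hrec, hrec ▸ dvd_mul_left _ _⟩
  · exact ⟨(hdeg i).trans (Multiset.countP_eq_card_filter _ _), coeff_zero_segQ i⟩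
  · simp only [hdeg]
    rw [Multiset.sum_Icc_countP_le_eq_sum_map Prod.snd s fun p hp => (hlength_lt p hp).le, hlen]

theorem stmt12 (q : ℂ) (hq : q ≠ 0) (hru : ∀ m : ℕ, 1 ≤ m → q ^ m ≠ 1)
    (n r : ℕ) (hr : 1 ≤ r) (hnr : r < n)
    (s : Multiset (ℂ × ℕ)) (hs : ∀ p ∈ s, p.1 ≠ 0 ∧ 1 ≤ p.2)
    (hlen : (s.map Prod.snd).sum = r) :
    (∀ i, 1 ≤ i → i ≤ n - 1 →
      scaleX (q ^ (i - 1)) (segQ q n s i)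
          = segP s i * scaleX (q ^ (i + 1)) (segQ q n s (i + 1)) ∧
      scaleX (q ^ (i + 1)) (segQ q n s (i + 1)) ∣
        scaleX (q ^ (i - 1)) (segQ q n s i)) ∧
    (∀ i, 1 ≤ i → i ≤ n →
      (segQ q n s i).natDegree = (s.filter (fun p => i ≤ p.2)).card ∧
      (segQ q n s i).coeff 0 = 1) ∧
    (∑ i ∈ Finset.Icc 1 n, (segQ q n s i).natDegree) = r :=
  stmt12_general q hq n r hnr s hs hlen
end
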